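/- arXiv:1911.02192 — 2 statements merged into one kernel-verified Lean document; each statement's English description precedes it below -/
import Mathlib

section
/- (Equivalence Theorem on manifolds, 3 ⇒ 1.) If a design ξ* satisfies sup_{z ∈ X} d(z,ξ*) = p − Tr( M(ξ*)⁻¹ C ), where d(z,ξ*) = g(z)ᵀ M(ξ*)⁻¹ g(z), then ξ* is D-optimal: det M(ξ*) ≥ det M(ξ) for every design ξ. -/
open MeasureTheory Matrix

/-!
With `A = M(ξ*)` and `B = M(ξ)`, integrating `d(z, ξ*) ≤ sup d(·, ξ*)` against `ξ` gives
`Tr(A⁻¹ B) = ∫ d(z, ξ*) dξ(z) + Tr(A⁻¹ C) ≤ p`. So the eigenvalues `λᵢ ≥ 0` of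
`A^{-1/2} B A^{-1/2}` sum to at most `p`, whence `det B / det A = ∏ λᵢ ≤ ∏ exp(λᵢ - 1) ≤ 1`.
-/

/-- The information matrix `M(ξ) = ∫_X g(z) g(z)ᵀ dξ(z) + C` of a design `ξ`
(a Borel probability measure on `X ⊆ ℝ^d`), defined entrywise. -/
noncomputable def infoMatrix {d p : ℕ} {X : Set (Fin d → ℝ)}
    (g : (Fin d → ℝ) → Fin p → ℝ) (C : Matrix (Fin p) (Fin p) ℝ)
    (ξ : Measure X) : Matrix (Fin p) (Fin p) ℝ :=
  Matrix.of fun i j => (∫ z, g (z : Fin d → ℝ) i * g (z : Fin d → ℝ) j ∂ξ) + C i j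

/-- The prediction variance `d(z,ξ) = g(z)ᵀ M(ξ)⁻¹ g(z)`. -/
noncomputable def predVar {d p : ℕ} {X : Set (Fin d → ℝ)}
    (g : (Fin d → ℝ) → Fin p → ℝ) (C : Matrix (Fin p) (Fin p) ℝ)
    (ξ : Measure X) (z : Fin d → ℝ) : ℝ :=
  g z ⬝ᵥ ((infoMatrix g C ξ)⁻¹ *ᵥ g z)

namespace Matrix

variable {n : Type*} [Fintype n] [DecidableEq n]

theorem PosSemidef.det_le_one_of_trace_le_card {S : Matrix n n ℝ} (hS : S.PosSemidef)
    (h : S.trace ≤ Fintype.card n) : S.det ≤ 1 := by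
  set lam := hS.isHermitian.eigenvalues
  have hlam : ∀ i, 0 ≤ lam i := hS.eigenvalues_nonneg
  calc S.det = ∏ i, lam i := by simpa using hS.isHermitian.det_eq_prod_eigenvalues
    _ ≤ ∏ i, Real.exp (lam i - 1) :=
        Finset.prod_le_prod (fun i _ => hlam i) fun i _ => by
          linarith [Real.add_one_le_exp (lam i - 1)]
    _ = Real.exp (S.trace - Fintype.card n) := by
        rw [← Real.exp_sum, Finset.sum_sub_distrib, hS.isHermitian.trace_eq_sum_eigenvalues]
        simp [lam]
    _ ≤ 1 := Real.exp_le_one_iff.mpr (by linarith)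

open scoped MatrixOrder in
theorem PosDef.det_le_of_trace_inv_mul_le_card {A B : Matrix n n ℝ} (hA : A.PosDef)
    (hB : B.PosSemidef) (h : (A⁻¹ * B).trace ≤ Fintype.card n) : B.det ≤ A.det := by
  set R := CFC.sqrt A
  have hRR : R * R = A := CFC.sqrt_mul_sqrt_self A hA.posSemidef.nonneg
  have hRinv : R⁻¹.IsHermitian := (CFC.sqrt_nonneg A).posSemidef.isHermitian.inv
  have hAinv : R⁻¹ * R⁻¹ = A⁻¹ := by rw [← Matrix.mul_inv_rev, hRR]
  have hS : (R⁻¹ * B * R⁻¹).PosSemidef := by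
    simpa only [hRinv.eq] using hB.mul_mul_conjTranspose_same R⁻¹
  have hdet : (R⁻¹ * B * R⁻¹).det = B.det / A.det := by
    rw [det_mul, det_mul, mul_right_comm, ← det_mul, hAinv, det_nonsing_inv,
      Ring.inverse_eq_inv', div_eq_inv_mul]
  have := hS.det_le_one_of_trace_le_card (by rwa [trace_mul_cycle, hAinv])
  rwa [hdet, div_le_one hA.det_pos] at this

end Matrix

section SecondMoment

variable {α n : Type*} [MeasurableSpace α]

noncomputable def secondMomentMatrix (f : α → n → ℝ) (μ : Measure α) : Matrix n n ℝ :=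
  Matrix.of fun i j => ∫ x, f x i * f x j ∂μ

variable {f : α → n → ℝ} {μ : Measure α}

theorem secondMomentMatrix_comm (i j : n) :
    secondMomentMatrix f μ j i = secondMomentMatrix f μ i j := by
  simp only [secondMomentMatrix, of_apply, mul_comm (f _ j)]

variable [Fintype n]

theorem integral_dotProduct_mulVec (hf : ∀ i j, Integrable (fun x => f x i * f x j) μ)
    (K : Matrix n n ℝ) :
    ∫ x, f x ⬝ᵥ (K *ᵥ f x) ∂μ = ∑ i, ∑ j, K i j * secondMomentMatrix f μ i j := by
  have hK : ∀ x, f x ⬝ᵥ (K *ᵥ f x) = ∑ i, ∑ j, K i j * (f x i * f x j) := fun x => by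
    simp only [dotProduct, mulVec, Finset.mul_sum]
    exact Finset.sum_congr rfl fun i _ => Finset.sum_congr rfl fun j _ => by ring
  simp_rw [hK]
  rw [integral_finsetSum (f := fun i x => ∑ j, K i j * (f x i * f x j)) _
    fun i _ => integrable_finsetSum _ fun j _ => (hf i j).const_mul _]
  refine Finset.sum_congr rfl fun i _ => ?_
  rw [integral_finsetSum (f := fun j x => K i j * (f x i * f x j)) _
    fun j _ => (hf i j).const_mul _]
  simp only [integral_const_mul, secondMomentMatrix, of_apply]

theorem trace_mul_secondMomentMatrix (hf : ∀ i j, Integrable (fun x => f x i * f x j) μ)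
    (K : Matrix n n ℝ) :
    (K * secondMomentMatrix f μ).trace = ∫ x, f x ⬝ᵥ (K *ᵥ f x) ∂μ := by
  simp only [integral_dotProduct_mulVec hf, trace, diag, mul_apply, secondMomentMatrix_comm]

theorem posSemidef_secondMomentMatrix (hf : ∀ i j, Integrable (fun x => f x i * f x j) μ) :
    (secondMomentMatrix f μ).PosSemidef := by
  refine .of_dotProduct_mulVec_nonneg (ext secondMomentMatrix_comm) fun v => ?_
  have hv : star v ⬝ᵥ (secondMomentMatrix f μ *ᵥ v) = ∫ x, (v ⬝ᵥ f x) ^ 2 ∂μ :=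
    calc star v ⬝ᵥ (secondMomentMatrix f μ *ᵥ v)
        = ∑ i, ∑ j, vecMulVec v v i j * secondMomentMatrix f μ i j := by
          simp only [star_trivial, dotProduct, mulVec, Finset.mul_sum, vecMulVec_apply]
          exact Finset.sum_congr rfl fun i _ => Finset.sum_congr rfl fun j _ => by ring
      _ = ∫ x, f x ⬝ᵥ (vecMulVec v v *ᵥ f x) ∂μ := (integral_dotProduct_mulVec hf _).symm
      _ = ∫ x, (v ⬝ᵥ f x) ^ 2 ∂μ := by
          simp only [vecMulVec_mulVec, op_smul_eq_smul, dotProduct_smul, smul_eq_mul,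
            dotProduct_comm (f _) v, sq]
  exact hv ▸ integral_nonneg fun x => sq_nonneg _

end SecondMoment

theorem integral_le_ciSup {α : Type*} [MeasurableSpace α] {μ : Measure α}
    [IsProbabilityMeasure μ] {F : α → ℝ} (hF : Integrable F μ)
    (hbdd : BddAbove (Set.range F)) :
    ∫ x, F x ∂μ ≤ ⨆ x, F x :=
  (integral_mono hF (integrable_const _) fun x => le_ciSup hbdd x).trans_eq (by simp)

section Design

variable {d p : ℕ} {X : Set (Fin d → ℝ)} {g : (Fin d → ℝ) → Fin p → ℝ}
  {C : Matrix (Fin p) (Fin p) ℝ}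

theorem infoMatrix_eq_secondMomentMatrix_add (ξ : Measure X) :
    infoMatrix g C ξ = secondMomentMatrix (fun z : X => g z) ξ + C :=
  rfl

theorem continuous_predVar (hg : Continuous g) (ξ : Measure X) : Continuous (predVar g C ξ) :=
  hg.dotProduct (continuous_const.matrix_mulVec hg)

end Design

theorem DOptimal_of_iSup_predVar_general {d p : ℕ}
    {X : Set (Fin d → ℝ)} (hX : IsCompact X)
    {g : (Fin d → ℝ) → Fin p → ℝ} (hg : Continuous g)
    {C : Matrix (Fin p) (Fin p) ℝ} (hC : C.PosDef)
    (ξstar : Measure X) [IsProbabilityMeasure ξstar]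
    (hsup : (⨆ z : X, predVar g C ξstar (z : Fin d → ℝ))
      = (p : ℝ) - Matrix.trace ((infoMatrix g C ξstar)⁻¹ * C)) :
    ∀ ξ : Measure X, IsProbabilityMeasure ξ →
      (infoMatrix g C ξ).det ≤ (infoMatrix g C ξstar).det := by
  intro ξ _
  have : CompactSpace X := isCompact_iff_compactSpace.mp hX
  have hG : Continuous fun z : X => g z := hg.comp continuous_subtype_val
  have hint (μ : Measure X) [IsFiniteMeasure μ] (i j : Fin p) :
      Integrable (fun z : X => g z i * g z j) μ :=
    (((continuous_apply i).comp hG).mul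
      ((continuous_apply j).comp hG)).integrable_of_hasCompactSupport (.of_compactSpace _)
  have hM (μ : Measure X) [IsFiniteMeasure μ] : (infoMatrix g C μ).PosDef :=
    Matrix.PosDef.posSemidef_add (posSemidef_secondMomentMatrix (hint μ)) hC
  have hV : Continuous fun z : X => predVar g C ξstar z :=
    (continuous_predVar hg ξstar).comp continuous_subtype_val
  refine (hM ξstar).det_le_of_trace_inv_mul_le_card (hM ξ).posSemidef ?_
  calc ((infoMatrix g C ξstar)⁻¹ * infoMatrix g C ξ).trace
      = ∫ z : X, predVar g C ξstar z ∂ξ + ((infoMatrix g C ξstar)⁻¹ * C).trace := by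
        rw [infoMatrix_eq_secondMomentMatrix_add ξ, mul_add, trace_add,
          trace_mul_secondMomentMatrix (hint ξ)]
        rfl
    _ ≤ (⨆ z : X, predVar g C ξstar z) + ((infoMatrix g C ξstar)⁻¹ * C).trace := by
        gcongr
        exact integral_le_ciSup (hV.integrable_of_hasCompactSupport (.of_compactSpace _))
          (isCompact_range hV).bddAbove
    _ = Fintype.card (Fin p) := by rw [hsup, Fintype.card_fin]; ring

/-- Equivalence theorem on manifolds, 3 ⇒ 1: a design whose maximum prediction variance
equals `p − Tr(M(ξ*)⁻¹ C)` is D-optimal. -/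
theorem DOptimal_of_iSup_predVar {d p : ℕ} (hd : 1 ≤ d) (hp : 1 ≤ p)
    {X : Set (Fin d → ℝ)} (hX : IsCompact X)
    {g : (Fin d → ℝ) → Fin p → ℝ} (hg : Continuous g)
    {C : Matrix (Fin p) (Fin p) ℝ} (hC : C.PosDef)
    (ξstar : Measure X) [IsProbabilityMeasure ξstar]
    (hsup : (⨆ z : X, predVar g C ξstar (z : Fin d → ℝ))
      = (p : ℝ) - Matrix.trace ((infoMatrix g C ξstar)⁻¹ * C)) :
    ∀ ξ : Measure X, IsProbabilityMeasure ξ →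
      (infoMatrix g C ξ).det ≤ (infoMatrix g C ξstar).det :=
  DOptimal_of_iSup_predVar_general hX hg hC ξstar hsup
end

section
/- Let ξ be a design and z ∈ X, and consider the one-parameter family of matrices α ↦ (1−α)·M(ξ) + α·( g(z)g(z)ᵀ + C ), which is the information matrix of the mixture of ξ with the single-point design at z. The function α ↦ log det( (1−α)·M(ξ) + α·( g(z)g(z)ᵀ + C ) ) is differentiable at α = 0 with derivative equal to d(z,ξ) + Tr( M(ξ)⁻¹ C ) − p, where d(z,ξ) = g(z)ᵀ M(ξ)⁻¹ g(z). -/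
open MeasureTheory Matrix

/-!
Along the segment, `(1 - α) M + α B = M (1 + α M⁻¹ (B - M))` with `M = M(ξ)`, so by Jacobi's
formula the derivative of `log det` at `α = 0` is `Tr (M⁻¹ (B - M)) = Tr (M⁻¹ B) - p`; for
`B = g(z) g(z)ᵀ + C` this is `d(z, ξ) + Tr (M⁻¹ C) - p`. The logarithm is differentiable there
because `M(ξ)` is positive definite: it is `C` plus the Gram matrix of the components of `g`
in `L²(ξ)`.
-/

open Polynomial in
theorem Matrix.hasDerivAt_det_one_add_smul {𝕜 n : Type*} [NontriviallyNormedField 𝕜]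
    [Fintype n] [DecidableEq n] (A : Matrix n n 𝕜) :
    HasDerivAt (fun r : 𝕜 => (1 + r • A).det) A.trace 0 := by
  have h := (det (1 + (X : 𝕜[X]) • A.map C)).hasDerivAt 0
  rw [derivative_det_one_add_X_smul] at h
  convert h using 1
  ext r
  simp [eval_det, ← smul_eq_mul_diagonal]

theorem Matrix.hasDerivAt_det_add_smul {𝕜 n : Type*} [NontriviallyNormedField 𝕜]
    [Fintype n] [DecidableEq n] (M D : Matrix n n 𝕜) (hM : IsUnit M.det) :
    HasDerivAt (fun r : 𝕜 => (M + r • D).det) (M.det * (M⁻¹ * D).trace) 0 := by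
  have hfactor : ∀ r : 𝕜, M + r • D = M * (1 + r • (M⁻¹ * D)) := fun r => by
    rw [Matrix.mul_add, Matrix.mul_one, Matrix.mul_smul, mul_nonsing_inv_cancel_left _ _ hM]
  simpa only [hfactor, det_mul] using (hasDerivAt_det_one_add_smul (M⁻¹ * D)).const_mul M.det

theorem Matrix.hasDerivAt_log_det_add_smul {n : Type*} [Fintype n] [DecidableEq n]
    (M D : Matrix n n ℝ) (hM : M.det ≠ 0) :
    HasDerivAt (fun r : ℝ => Real.log (M + r • D).det) (M⁻¹ * D).trace 0 := by
  have h := (hasDerivAt_det_add_smul M D hM.isUnit).log (by simpa using hM)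
  simpa [hM] using h

theorem Matrix.posSemidef_of_integral_mul {ι Ω : Type*} [Fintype ι] [MeasurableSpace Ω]
    {μ : Measure Ω} {f : Ω → ι → ℝ} (hf : ∀ i j, Integrable (fun ω => f ω i * f ω j) μ) :
    (Matrix.of fun i j => ∫ ω, f ω i * f ω j ∂μ).PosSemidef := by
  refine .of_dotProduct_mulVec_nonneg ?_ fun x => ?_
  · ext i j
    simp only [conjTranspose_apply, of_apply, star_trivial, mul_comm]
  have hterm : ∀ i j, Integrable (fun ω => x i * f ω i * (x j * f ω j)) μ := fun i j =>
    ((hf i j).const_mul (x i * x j)).congr (.of_forall fun ω => by ring)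
  have hquad : star x ⬝ᵥ ((Matrix.of fun i j => ∫ ω, f ω i * f ω j ∂μ) *ᵥ x)
      = ∫ ω, (∑ i, x i * f ω i) ^ 2 ∂μ := by
    simp_rw [sq, Finset.sum_mul_sum]
    rw [integral_finsetSum _ fun i _ => integrable_finsetSum _ fun j _ => hterm i j]
    simp only [dotProduct, mulVec, of_apply, star_trivial, Pi.star_apply, Finset.mul_sum]
    refine Finset.sum_congr rfl fun i _ => ?_
    rw [integral_finsetSum _ fun j _ => hterm i j]
    refine Finset.sum_congr rfl fun j _ => ?_
    rw [← integral_mul_const, ← integral_const_mul]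
    exact integral_congr_ae (.of_forall fun ω => by ring)
  exact hquad ▸ integral_nonneg fun ω => sq_nonneg _

theorem infoMatrix_posDef {d p : ℕ} {X : Set (Fin d → ℝ)} (hX : IsCompact X)
    {g : (Fin d → ℝ) → Fin p → ℝ} (hg : Continuous g)
    {C : Matrix (Fin p) (Fin p) ℝ} (hC : C.PosDef) (ξ : Measure X) [IsFiniteMeasure ξ] :
    (infoMatrix g C ξ).PosDef := by
  have : CompactSpace X := isCompact_iff_compactSpace.mp hX
  have hgX : Continuous fun w : X => g w := hg.comp continuous_subtype_val
  refine PosDef.posSemidef_add (posSemidef_of_integral_mul fun i j => ?_) hC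
  exact Continuous.integrable_of_hasCompactSupport (by fun_prop) (.of_compactSpace _)

theorem hasDerivAt_logDet_point_mixture_general {d p : ℕ}
    {X : Set (Fin d → ℝ)} (hX : IsCompact X)
    {g : (Fin d → ℝ) → Fin p → ℝ} (hg : Continuous g)
    {C : Matrix (Fin p) (Fin p) ℝ} (hC : C.PosDef)
    (ξ : Measure X) [IsProbabilityMeasure ξ]
    (z : Fin d → ℝ) :
    HasDerivAt
      (fun α : ℝ =>
        Real.log ((1 - α) • infoMatrix g C ξ + α • (vecMulVec (g z) (g z) + C)).det)
      (predVar g C ξ z + Matrix.trace ((infoMatrix g C ξ)⁻¹ * C) - p) 0 := by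
  set M := infoMatrix g C ξ
  set B := vecMulVec (g z) (g z) + C
  have hdet : M.det ≠ 0 := (infoMatrix_posDef hX hg hC ξ).det_pos.ne'
  have hsegment : ∀ α : ℝ, (1 - α) • M + α • B = M + α • (B - M) := fun α => by
    rw [sub_smul, one_smul, smul_sub]; abel
  simp_rw [hsegment]
  convert hasDerivAt_log_det_add_smul M (B - M) hdet using 1
  rw [Matrix.mul_sub, trace_sub, nonsing_inv_mul _ hdet.isUnit, trace_one, Matrix.mul_add,
    trace_add, mul_vecMulVec, trace_vecMulVec, dotProduct_comm, Fintype.card_fin]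
  rfl

/-- The map `α ↦ log det((1−α)M(ξ) + α(g(z)g(z)ᵀ + C))`, obtained by mixing `ξ` with the
single-point design at `z`, has derivative `d(z,ξ) + Tr(M(ξ)⁻¹ C) − p` at `α = 0`. -/
theorem hasDerivAt_logDet_point_mixture {d p : ℕ} (hd : 1 ≤ d) (hp : 1 ≤ p)
    {X : Set (Fin d → ℝ)} (hX : IsCompact X)
    {g : (Fin d → ℝ) → Fin p → ℝ} (hg : Continuous g)
    {C : Matrix (Fin p) (Fin p) ℝ} (hC : C.PosDef)
    (ξ : Measure X) [IsProbabilityMeasure ξ]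
    (z : Fin d → ℝ) (hz : z ∈ X) :
    HasDerivAt
      (fun α : ℝ =>
        Real.log ((1 - α) • infoMatrix g C ξ + α • (vecMulVec (g z) (g z) + C)).det)
      (predVar g C ξ z + Matrix.trace ((infoMatrix g C ξ)⁻¹ * C) - p) 0 :=
  hasDerivAt_logDet_point_mixture_general hX hg hC ξ z
end
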